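/- Let G be a locally finite tree and consider a transient rotor walk started at a with sink Z and final rotor configuration ξ. If x lies on the maximal forward path P(a,ξ) and x is incomplete in ξ, then all vertices visited by the walk up to and including the last visit of x lie in W(ξ,x), the set of vertices from which there is a directed path to x in ξ. -/

import Mathlib

open MeasureTheory Filter ENNReal Set

namespace RotorWalk

variable {V : Type*} [DecidableEq V]

/-- One step of the rotor walk with local mechanisms `τ`:
the rotor at the current position is advanced and the walker follows it. -/
def step (τ : V → V → V) (p : V × (V → V)) : V × (V → V) :=
  (τ p.1 (p.2 p.1), Function.update p.2 p.1 (τ p.1 (p.2 p.1)))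

/-- Trajectory (position, rotor configuration) of the rotor walk started at `a`
with initial rotor configuration `ρ`. -/
def traj (τ : V → V → V) (a : V) (ρ : V → V) : ℕ → V × (V → V)
  | 0 => (a, ρ)
  | t + 1 => step τ (traj τ a ρ t)

/-- Position of the walker at time `t`. -/
def pos (τ : V → V → V) (a : V) (ρ : V → V) (t : ℕ) : V := (traj τ a ρ t).1

/-- Rotor configuration at time `t`. -/
def conf (τ : V → V → V) (a : V) (ρ : V → V) (t : ℕ) : V → V := (traj τ a ρ t).2

/-- The walk has not hit the sink `Z` up to and including time `t`. -/
def aliveAt (τ : V → V → V) (Z : Set V) (a : V) (ρ : V → V) (t : ℕ) : Prop :=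
  ∀ s ≤ t, pos τ a ρ s ∉ Z

/-- Odometer: the number of visits to `x` strictly before hitting the sink `Z`. -/
noncomputable def odometer (τ : V → V → V) (Z : Set V) (a : V) (ρ : V → V) (x : V) : ℕ∞ :=
  {t : ℕ | aliveAt τ Z a ρ t ∧ pos τ a ρ t = x}.encard

/-- Number of traversals of the directed edge `(y, x)` strictly before hitting `Z`. -/
noncomputable def edgeCount (τ : V → V → V) (Z : Set V) (a : V) (ρ : V → V) (y x : V) : ℕ∞ :=
  {t : ℕ | aliveAt τ Z a ρ t ∧ pos τ a ρ t = y ∧ pos τ a ρ (t + 1) = x}.encard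

open Classical in
/-- The final rotor configuration: the configuration at the hitting time of `Z` if the walk
hits `Z`, and otherwise the pointwise eventual value of the rotor configuration
(which exists when the walk is transient). -/
noncomputable def finalConf (τ : V → V → V) (Z : Set V) (a : V) (ρ : V → V) : V → V :=
  if ∃ t, pos τ a ρ t ∈ Z then conf τ a ρ (sInf {t | pos τ a ρ t ∈ Z})
  else fun x => if h : ∃ v, ∀ᶠ t in atTop, conf τ a ρ t x = v then h.choose else ρ x

/-- Total number of visits to `x` by `n` sequential rotor walks (rotors not reset). -/
noncomputable def Svis (τ : V → V → V) (Z : Set V) (a : V) (ρ : V → V) (n : ℕ) (x : V) : ℕ∞ :=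
  ∑ i ∈ Finset.range n, odometer τ Z a ((finalConf τ Z a)^[i] ρ) x

/-- Total number of traversals of the directed edge `(y,x)` by `n` sequential rotor walks. -/
noncomputable def Sedge (τ : V → V → V) (Z : Set V) (a : V) (ρ : V → V) (n : ℕ) (y x : V) : ℕ∞ :=
  ∑ i ∈ Finset.range n, edgeCount τ Z a ((finalConf τ Z a)^[i] ρ) y x

/-- The rotor walk is transient: every vertex is visited finitely often (before hitting `Z`). -/
def IsTransientWalk (τ : V → V → V) (Z : Set V) (a : V) (ρ : V → V) : Prop :=
  ∀ x : V, {t : ℕ | aliveAt τ Z a ρ t ∧ pos τ a ρ t = x}.Finite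

open Classical in
/-- Total number of visits to `x` by `n` sequential rotor walks with empty sink,
set to `⊤` if one of the `n` walks fails to be transient. -/
noncomputable def SvisT (τ : V → V → V) (a : V) (ρ : V → V) (n : ℕ) (x : V) : ℕ∞ :=
  if ∀ i < n, IsTransientWalk τ ∅ a ((finalConf τ ∅ a)^[i] ρ) then Svis τ ∅ a ρ n x else ⊤

/-- The local mechanisms map neighbors to neighbors and have a single orbit on each
neighborhood (off the sink). -/
def ValidMechanism (G : SimpleGraph V) (Z : Set V) (τ : V → V → V) : Prop :=
  ∀ x ∉ Z, (∀ y, G.Adj x y → G.Adj x (τ x y)) ∧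
    ∀ y, G.Adj x y → ∀ z, G.Adj x z → ∃ i : ℕ, (τ x)^[i] y = z

/-- A rotor configuration: every rotor (off the sink) points to a neighbor. -/
def ValidConfig (G : SimpleGraph V) (Z : Set V) (ρ : V → V) : Prop :=
  ∀ x ∉ Z, G.Adj x (ρ x)

/-- Time-`t` distribution of the simple random walk started at `a` and killed on `Z`. -/
noncomputable def srw (G : SimpleGraph V) [G.LocallyFinite] (Z : Set V) (a : V) :
    ℕ → V → ℝ≥0∞
  | 0 => Set.indicator {a} 1
  | t + 1 => fun x =>
      ∑' y : V, Set.indicator {y | G.Adj y x ∧ y ∉ Z}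
        (fun y => srw G Z a t y / (G.degree y : ℝ≥0∞)) y

/-- Green function: the expected number of visits to a vertex, strictly before hitting `Z`,
of the simple random walk started at `a`. -/
noncomputable def green (G : SimpleGraph V) [G.LocallyFinite] (Z : Set V) (a : V) : V → ℝ≥0∞ :=
  Set.indicator Zᶜ (fun x => ∑' t : ℕ, srw G Z a t x)

/-- The graph is transient: the Green function (with empty sink) is finite. -/
def TransientGraph (G : SimpleGraph V) [G.LocallyFinite] : Prop :=
  ∀ a x : V, green G ∅ a x < ⊤

/-- A `Z`-oriented spanning forest, encoded as a rotor configuration: off `Z` it points to a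
neighbor, on `Z` it is normalized to the identity, and every vertex eventually reaches `Z`. -/
def IsOSF (G : SimpleGraph V) (Z : Set V) (ρ : V → V) : Prop :=
  (∀ x ∉ Z, G.Adj x (ρ x)) ∧ (∀ x ∈ Z, ρ x = x) ∧ ∀ x : V, ∃ n : ℕ, ρ^[n] x ∈ Z

/-- An oriented spanning forest of an infinite graph: every vertex has out-degree one along
an edge and there is no directed cycle. -/
def IsOSFInf (G : SimpleGraph V) (ρ : V → V) : Prop :=
  (∀ x, G.Adj x (ρ x)) ∧ ∀ x : V, ∀ n > 0, ρ^[n] x ≠ x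

/-- A spanning forest of the ball of radius `R` around `a`, oriented toward the boundary
sphere (the sink), normalized to the identity outside the open ball. -/
def IsOSFBall (G : SimpleGraph V) (a : V) (R : ℕ) (ρ : V → V) : Prop :=
  (∀ x, G.dist a x < R → G.Adj x (ρ x)) ∧
  (∀ x, ¬ G.dist a x < R → ρ x = x) ∧
  ∀ x, G.dist a x < R → ∃ n : ℕ, G.dist a (ρ^[n] x) = R

instance : MeasurableSpace (V → V) := ⊤

/-- `μ` is the oriented wired uniform spanning forest measure of `G` (with respect to the
exhaustion by balls around `a`): it is a probability measure supported on oriented spanning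
forests whose finite-dimensional marginals are the limits of the uniform measures on
boundary-oriented spanning forests of the balls. -/
def IsOWUSF (G : SimpleGraph V) (a : V) (μ : Measure (V → V)) : Prop :=
  IsProbabilityMeasure μ ∧
  (∀ᵐ ρ ∂μ, IsOSFInf G ρ) ∧
  ∀ B : Finset (V × V),
    Tendsto (fun R : ℕ =>
        (({ρ : V → V | IsOSFBall G a R ρ ∧ ∀ e ∈ B, ρ e.1 = e.2}.ncard : ℝ) /
          ({ρ : V → V | IsOSFBall G a R ρ}.ncard : ℝ))) atTop
      (nhds ((μ {ρ : V → V | ∀ e ∈ B, ρ e.1 = e.2}).toReal))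

/-- Vertex-transitivity. -/
def VertexTransitive (G : SimpleGraph V) : Prop :=
  ∀ u v : V, ∃ φ : G ≃g G, φ u = v

/-- `μ` is stationary for the rotor walk (empty sink) started at `a`: almost every walk is
transient and the final rotor configuration again has law `μ`. -/
def RWStationary (τ : V → V → V) (a : V) (μ : Measure (V → V)) : Prop :=
  (∀ᵐ ρ ∂μ, IsTransientWalk τ ∅ a ρ) ∧ μ.map (finalConf τ ∅ a) = μ

/-- `u` and `v` lie in the same (weak) component of the oriented subgraph given by `ξ`. -/
def sameTree (ξ : V → V) (u v : V) : Prop :=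
  Relation.ReflTransGen (fun p q => ξ p = q ∨ ξ q = p) u v

/-- `x` is incomplete in `ξ`: some `G`-neighbor of `x` is not in the `ξ`-component of `x`. -/
def Incomplete (G : SimpleGraph V) (ξ : V → V) (x : V) : Prop :=
  ∃ y, G.Adj x y ∧ ¬ sameTree ξ x y

/-- Last visit time of `x` by the rotor walk terminated upon hitting `Z`. -/
noncomputable def lastVisit (τ : V → V → V) (Z : Set V) (a : V) (ρ : V → V) (x : V) : ℕ :=
  sSup {t | (∀ s < t, pos τ a ρ s ∉ Z) ∧ pos τ a ρ t = x}

/-- The set of vertices having a directed `ξ`-path to `x`. -/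
def W (ξ : V → V) (x : V) : Set V :=
  {y | Relation.ReflTransGen (fun p q => ξ p = q) y x}

end RotorWalk

/-!
On a tree every edge `{x, z}` separates, so a nearest-neighbour walk passes between its two sides
only along that edge. Let `L` be the last visit to `x`; at time `L + 1` the walk steps to
`z = ξ x`. After time `L` it is trapped on the `z`-side, since leaving it means stepping to `x`.
Up to time `L` it is never on the `z`-side: the start `a` is not (it reaches `x` along `ξ`, and
`ξ z ≠ x`), so the walk would have to step from `x` to `z` twice by time `L + 1`. In between,
the rotor at `x` turns fully and the walk visits every neighbour `y` of `x`; but the last visits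
to two adjacent vertices `x, y` are joined by a crossing of the edge `{x, y}`, which forces
`ξ x = y` or `ξ y = x`, contradicting incompleteness. Hence each vertex visited by time `L` is
last visited by time `L`, and following the rotors of these last exits leads to `x`.
-/

theorem Nat.exists_boundary_step {P : ℕ → Prop} {m n : ℕ} (hmn : m ≤ n) (hm : P m)
    (hn : ¬P n) :
    ∃ k, m ≤ k ∧ k < n ∧ P k ∧ ¬P (k + 1) := by
  induction n, hmn using Nat.le_induction with
  | base => exact absurd hm hn
  | succ n hmn ih =>
    by_cases hPn : P n
    · exact ⟨n, hmn, n.lt_succ_self, hPn, hn⟩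
    · obtain ⟨k, hmk, hkn, hk⟩ := ih hPn
      exact ⟨k, hmk, hkn.trans n.lt_succ_self, hk⟩

theorem Nat.exists_lt_count_eq {p : ℕ → Prop} [DecidablePred p] {j n : ℕ}
    (h : j < Nat.count p n) : ∃ s < n, p s ∧ Nat.count p s = j := by
  have hcard : ∀ hf : (Set.ofPred p).Finite, j < hf.toFinset.card :=
    fun hf => h.trans_le (Nat.count_le_card hf n)
  exact ⟨Nat.nth p j, Nat.nth_lt_of_lt_count h, Nat.nth_mem j hcard, Nat.count_nth hcard⟩

namespace SimpleGraph

variable {V : Type*} {G : SimpleGraph V} {x z p q : V}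

def branch (G : SimpleGraph V) (x z : V) : Set V :=
  {y | ¬(G.deleteEdges {s(x, z)}).Reachable y x}

theorem left_notMem_branch : x ∉ G.branch x z := fun h => h .rfl

theorem IsAcyclic.right_mem_branch (hac : G.IsAcyclic) (hxz : G.Adj x z) :
    z ∈ G.branch x z := by
  have hb := isAcyclic_iff_forall_adj_isBridge.mp hac hxz
  rw [isBridge_iff] at hb
  exact fun h => hb h.symm

theorem IsAcyclic.eq_of_adj_of_notMem_branch_of_mem_branch (hac : G.IsAcyclic)
    (hxz : G.Adj x z) (hpq : G.Adj p q) (hp : p ∉ G.branch x z) (hq : q ∈ G.branch x z) :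
    p = x ∧ q = z := by
  have hpx : (G.deleteEdges {s(x, z)}).Reachable p x := not_not.mp hp
  by_cases he : s(p, q) = s(x, z)
  · rcases Sym2.eq_iff.mp he with ⟨rfl, rfl⟩ | ⟨rfl, rfl⟩
    · exact ⟨rfl, rfl⟩
    · exact absurd (hac.right_mem_branch hxz) hp
  · have hqp : (G.deleteEdges {s(x, z)}).Adj q p := by
      rw [deleteEdges_adj]
      exact ⟨hpq.symm, by simpa [Sym2.eq_swap] using he⟩
    exact absurd (hqp.reachable.trans hpx) hq

theorem IsAcyclic.exists_step_into_branch (hac : G.IsAcyclic) (hxz : G.Adj x z) {f : ℕ → V}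
    {m n : ℕ} (hmn : m ≤ n) (hf : ∀ k < n, G.Adj (f k) (f (k + 1)))
    (hm : f m ∉ G.branch x z) (hn : f n ∈ G.branch x z) :
    ∃ k, m ≤ k ∧ k < n ∧ f k = x ∧ f (k + 1) = z := by
  obtain ⟨k, hmk, hkn, hk, hk1⟩ :=
    Nat.exists_boundary_step (P := fun k => f k ∉ G.branch x z) hmn hm (not_not.mpr hn)
  exact ⟨k, hmk, hkn,
    hac.eq_of_adj_of_notMem_branch_of_mem_branch hxz (hf k hkn) hk (not_not.mp hk1)⟩

theorem IsAcyclic.exists_step_out_of_branch (hac : G.IsAcyclic) (hxz : G.Adj x z) {f : ℕ → V}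
    {m n : ℕ} (hmn : m ≤ n) (hf : ∀ k < n, G.Adj (f k) (f (k + 1)))
    (hm : f m ∈ G.branch x z) (hn : f n ∉ G.branch x z) :
    ∃ k, m ≤ k ∧ k < n ∧ f k = z ∧ f (k + 1) = x := by
  obtain ⟨k, hmk, hkn, hk, hk1⟩ :=
    Nat.exists_boundary_step (P := fun k => f k ∈ G.branch x z) hmn hm hn
  obtain ⟨hx, hz⟩ := hac.eq_of_adj_of_notMem_branch_of_mem_branch hxz (hf k hkn).symm hk1 hk
  exact ⟨k, hmk, hkn, hz, hx⟩

end SimpleGraph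

namespace RotorWalk

open SimpleGraph

theorem mem_W_iterate {V : Type*} (ξ : V → V) (a : V) (j : ℕ) : a ∈ W ξ (ξ^[j] a) := by
  induction j with
  | zero => exact .refl
  | succ j ih => exact .tail ih (Function.iterate_succ_apply' ξ j a).symm

variable {V : Type*} [DecidableEq V] {τ : V → V → V} {Z : Set V} {a : V} {ρ : V → V}
  {G : SimpleGraph V} {x y : V}

theorem pos_succ (t : ℕ) :
    pos τ a ρ (t + 1) = τ (pos τ a ρ t) (conf τ a ρ t (pos τ a ρ t)) :=
  rfl

theorem conf_succ (t : ℕ) :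
    conf τ a ρ (t + 1) = Function.update (conf τ a ρ t) (pos τ a ρ t) (pos τ a ρ (t + 1)) :=
  rfl

theorem conf_apply_eq_iterate (y : V) (t : ℕ) :
    conf τ a ρ t y = (τ y)^[Nat.count (pos τ a ρ · = y) t] (ρ y) := by
  induction t with
  | zero => simp [conf, traj]
  | succ t ih =>
    rw [conf_succ, Nat.count_succ]
    by_cases h : pos τ a ρ t = y
    · subst h
      rw [Function.update_self, pos_succ, ih, if_pos rfl, Function.iterate_succ_apply']
    · rw [Function.update_of_ne (Ne.symm h), ih, if_neg h, add_zero]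

theorem pos_succ_eq_iterate {t : ℕ} (h : pos τ a ρ t = y) :
    pos τ a ρ (t + 1) = (τ y)^[Nat.count (pos τ a ρ · = y) t + 1] (ρ y) := by
  rw [pos_succ, h, conf_apply_eq_iterate, Function.iterate_succ_apply']

theorem conf_apply_eq_of_forall_pos_ne {T m : ℕ} (hTm : T ≤ m)
    (h : ∀ s, T ≤ s → s < m → pos τ a ρ s ≠ y) :
    conf τ a ρ m y = conf τ a ρ T y := by
  induction m, hTm using Nat.le_induction with
  | base => rfl
  | succ m hTm ih =>
    rw [conf_succ, Function.update_of_ne (h m hTm m.lt_succ_self).symm,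
      ih fun s h1 h2 => h s h1 (h2.trans m.lt_succ_self)]

/-- Between two exits from `x` towards the same vertex, the rotor at `x` makes a full turn. -/
theorem exists_exit_between_repeated_exits {k k' m : ℕ} (hk : pos τ a ρ k = x)
    (hk' : pos τ a ρ k' = x) (hkk' : k < k') (hexit : pos τ a ρ (k + 1) = pos τ a ρ (k' + 1))
    (hy : (τ x)^[m] (pos τ a ρ (k + 1)) = y) :
    ∃ s, k ≤ s ∧ s < k' ∧ pos τ a ρ s = x ∧ pos τ a ρ (s + 1) = y := by
  set N := Nat.count (pos τ a ρ · = x)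
  have hp := pos_succ_eq_iterate hk
  have hNk : N k + 1 ≤ N k' :=
    (Nat.count_succ_eq_succ_count_iff.mpr hk).symm.trans_le (Nat.count_monotone _ hkk')
  have hper : Function.IsPeriodicPt (τ x) (N k' - N k) (pos τ a ρ (k + 1)) :=
    calc (τ x)^[N k' - N k] (pos τ a ρ (k + 1))
        = (τ x)^[N k' - N k + (N k + 1)] (ρ x) := by rw [hp, ← Function.iterate_add_apply]
      _ = pos τ a ρ (k + 1) := by
        rw [show N k' - N k + (N k + 1) = N k' + 1 by omega, hexit, pos_succ_eq_iterate hk']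
  have hr := Nat.mod_lt m (show 0 < N k' - N k by omega)
  obtain ⟨s, hsk', hsx, hs⟩ : ∃ s < k', pos τ a ρ s = x ∧ N s = N k + m % (N k' - N k) :=
    Nat.exists_lt_count_eq (show N k + m % (N k' - N k) < N k' by omega)
  refine ⟨s, not_lt.mp fun hsk => ?_, hsk', hsx, ?_⟩
  · have : N s < N k := Nat.count_strict_mono hsx hsk
    omega
  · calc pos τ a ρ (s + 1) = (τ x)^[N s + 1] (ρ x) := pos_succ_eq_iterate hsx
      _ = (τ x)^[m % (N k' - N k)] ((τ x)^[N k + 1] (ρ x)) := by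
        rw [hs, ← Function.iterate_add_apply]
        congr 1
        omega
      _ = y := by rw [← hp, hper.iterate_mod_apply, hy]

theorem validConfig_conf (hτ : ValidMechanism G Z τ) (hρ : ValidConfig G Z ρ) (t : ℕ) :
    ValidConfig G Z (conf τ a ρ t) := by
  induction t with
  | zero => exact hρ
  | succ t ih =>
    intro y hy
    rw [conf_succ]
    by_cases h : y = pos τ a ρ t
    · subst h
      rw [Function.update_self, pos_succ]
      exact (hτ _ hy).1 _ (ih _ hy)
    · rw [Function.update_of_ne h]
      exact ih y hy

theorem adj_pos_succ (hτ : ValidMechanism G Z τ) (hρ : ValidConfig G Z ρ) {t : ℕ}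
    (ht : pos τ a ρ t ∉ Z) : G.Adj (pos τ a ρ t) (pos τ a ρ (t + 1)) :=
  (hτ _ ht).1 _ (validConfig_conf hτ hρ t _ ht)

variable (τ Z a ρ) in
def visitTimes (y : V) : Set ℕ := {t | (∀ s < t, pos τ a ρ s ∉ Z) ∧ pos τ a ρ t = y}

theorem lastVisit_eq_sSup : lastVisit τ Z a ρ y = sSup (visitTimes τ Z a ρ y) := rfl

theorem mem_visitTimes_pos_of_le {L u : ℕ} (hL : L ∈ visitTimes τ Z a ρ y) (hu : u ≤ L) :
    u ∈ visitTimes τ Z a ρ (pos τ a ρ u) :=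
  ⟨fun s hs => hL.1 s (by omega), rfl⟩

theorem pos_notMem_of_le {L u : ℕ} (hL : L ∈ visitTimes τ Z a ρ y) (hy : y ∉ Z)
    (hu : u ≤ L) :
    pos τ a ρ u ∉ Z := by
  rcases hu.lt_or_eq with hu | rfl
  · exact hL.1 u hu
  · exact hL.2 ▸ hy

theorem succ_mem_visitTimes {L : ℕ} (hL : L ∈ visitTimes τ Z a ρ y) (hy : y ∉ Z) :
    L + 1 ∈ visitTimes τ Z a ρ (pos τ a ρ (L + 1)) :=
  ⟨fun _ hs => pos_notMem_of_le hL hy (Nat.lt_succ_iff.mp hs), rfl⟩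

theorem bddAbove_visitTimes (hwalk : IsTransientWalk τ Z a ρ) (hy : y ∉ Z) :
    BddAbove (visitTimes τ Z a ρ y) :=
  (hwalk y).bddAbove.mono fun t ht =>
    show aliveAt τ Z a ρ t ∧ pos τ a ρ t = y from
      ⟨fun _ hs => pos_notMem_of_le ht hy hs, ht.2⟩

theorem le_lastVisit (hwalk : IsTransientWalk τ Z a ρ) (hy : y ∉ Z) {t : ℕ}
    (ht : t ∈ visitTimes τ Z a ρ y) : t ≤ lastVisit τ Z a ρ y :=
  le_csSup (bddAbove_visitTimes hwalk hy) ht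

theorem lastVisit_mem (hwalk : IsTransientWalk τ Z a ρ) (hy : y ∉ Z) {t : ℕ}
    (ht : t ∈ visitTimes τ Z a ρ y) : lastVisit τ Z a ρ y ∈ visitTimes τ Z a ρ y :=
  Nat.sSup_mem ⟨t, ht⟩ (bddAbove_visitTimes hwalk hy)

theorem finalConf_apply_eq_conf {T : ℕ} (hT : ∀ s < T, pos τ a ρ s ∉ Z)
    (hlater : ∀ s, T ≤ s → (∀ u < s, pos τ a ρ u ∉ Z) → pos τ a ρ s ≠ y) :
    finalConf τ Z a ρ y = conf τ a ρ T y := by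
  have hconst :
      ∀ m, T ≤ m → (∀ u < m, pos τ a ρ u ∉ Z) → conf τ a ρ m y = conf τ a ρ T y :=
    fun m hTm hm => conf_apply_eq_of_forall_pos_ne hTm fun s hTs hsm =>
      hlater s hTs fun u hu => hm u (hu.trans hsm)
  have heventually (hhit : ¬∃ t, pos τ a ρ t ∈ Z) :
      ∀ᶠ m in atTop, conf τ a ρ m y = conf τ a ρ T y :=
    eventually_atTop.mpr ⟨T, fun m hm => hconst m hm fun u _ hu => hhit ⟨u, hu⟩⟩
  rw [finalConf]
  split_ifs with hhit
  · exact hconst _ (not_lt.mp fun hlt => hT _ hlt (Nat.sInf_mem hhit))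
      fun _ hu => Nat.notMem_of_lt_sInf hu
  · have hlim : ∃ v, ∀ᶠ m in atTop, conf τ a ρ m y = v := ⟨_, heventually hhit⟩
    obtain ⟨m, hm, hm'⟩ := (hlim.choose_spec.and (heventually hhit)).exists
    beta_reduce
    rw [dif_pos hlim, ← hm, hm']

theorem finalConf_apply_eq_conf_lastVisit_succ (hwalk : IsTransientWalk τ Z a ρ) (hy : y ∉ Z)
    {t : ℕ} (ht : t ∈ visitTimes τ Z a ρ y) :
    finalConf τ Z a ρ y = conf τ a ρ (lastVisit τ Z a ρ y + 1) y :=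
  finalConf_apply_eq_conf (succ_mem_visitTimes (lastVisit_mem hwalk hy ht) hy).1
    fun s hs hsZ hsy => absurd (le_lastVisit hwalk hy ⟨hsZ, hsy⟩) (by omega)

theorem finalConf_eq_pos_lastVisit_succ (hwalk : IsTransientWalk τ Z a ρ) (hy : y ∉ Z) {t : ℕ}
    (ht : t ∈ visitTimes τ Z a ρ y) :
    finalConf τ Z a ρ y = pos τ a ρ (lastVisit τ Z a ρ y + 1) := by
  rw [finalConf_apply_eq_conf_lastVisit_succ hwalk hy ht, conf_succ,
    (lastVisit_mem hwalk hy ht).2, Function.update_self]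

theorem validConfig_finalConf (hτ : ValidMechanism G Z τ) (hρ : ValidConfig G Z ρ)
    (hwalk : IsTransientWalk τ Z a ρ) : ValidConfig G Z (finalConf τ Z a ρ) := by
  intro y hy
  obtain ⟨T, hT⟩ : ∃ T, finalConf τ Z a ρ y = conf τ a ρ T y := by
    obtain hempty | ⟨t, ht⟩ := (visitTimes τ Z a ρ y).eq_empty_or_nonempty
    · exact ⟨0, finalConf_apply_eq_conf (by simp) fun s _ hsZ hsy =>
        hempty.subset ⟨hsZ, hsy⟩⟩
    · exact ⟨_, finalConf_apply_eq_conf_lastVisit_succ hwalk hy ht⟩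
  rw [hT]
  exact validConfig_conf hτ hρ T y hy

theorem finalConf_finalConf_ne (hwalk : IsTransientWalk τ Z a ρ) (hx : x ∉ Z)
    (hz : finalConf τ Z a ρ x ∉ Z) {t : ℕ} (ht : t ∈ visitTimes τ Z a ρ x) :
    finalConf τ Z a ρ (finalConf τ Z a ρ x) ≠ x := by
  intro hzx
  have hxz := finalConf_eq_pos_lastVisit_succ hwalk hx ht
  have hz_vis : lastVisit τ Z a ρ x + 1 ∈ visitTimes τ Z a ρ (finalConf τ Z a ρ x) :=
    hxz ▸ succ_mem_visitTimes (lastVisit_mem hwalk hx ht) hx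
  have hLz := lastVisit_mem hwalk hz hz_vis
  have hx_vis : lastVisit τ Z a ρ (finalConf τ Z a ρ x) + 1 ∈ visitTimes τ Z a ρ x := by
    refine ⟨(succ_mem_visitTimes hLz hz).1, ?_⟩
    rw [← finalConf_eq_pos_lastVisit_succ hwalk hz hz_vis, hzx]
  have := le_lastVisit hwalk hz hz_vis
  have := le_lastVisit hwalk hx hx_vis
  omega

section Tree

variable (hac : G.IsAcyclic) (hτ : ValidMechanism G Z τ) (hρ : ValidConfig G Z ρ)
  (hwalk : IsTransientWalk τ Z a ρ)
include hac hτ hρ hwalk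

theorem finalConf_eq_of_adj_of_lastVisit_lt (hxy : G.Adj x y) (hx : x ∉ Z) (hy : y ∉ Z)
    {tx ty : ℕ} (htx : tx ∈ visitTimes τ Z a ρ x) (hty : ty ∈ visitTimes τ Z a ρ y)
    (hlt : lastVisit τ Z a ρ x < lastVisit τ Z a ρ y) : finalConf τ Z a ρ x = y := by
  have hLx := lastVisit_mem hwalk hx htx
  have hLy := lastVisit_mem hwalk hy hty
  obtain ⟨k, hLk, hkL, hkx, hky⟩ := hac.exists_step_into_branch (f := pos τ a ρ) hxy hlt.le
    (fun k hk => adj_pos_succ hτ hρ (hLy.1 k hk))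
    (by rw [hLx.2]; exact left_notMem_branch) (by rw [hLy.2]; exact hac.right_mem_branch hxy)
  have hk : k = lastVisit τ Z a ρ x :=
    le_antisymm (le_lastVisit hwalk hx ⟨fun s hs => hLy.1 s (hs.trans hkL), hkx⟩) hLk
  rw [finalConf_eq_pos_lastVisit_succ hwalk hx htx, ← hk, hky]

theorem sameTree_of_adj_of_mem_visitTimes (hxy : G.Adj x y) (hx : x ∉ Z) (hy : y ∉ Z)
    {tx ty : ℕ} (htx : tx ∈ visitTimes τ Z a ρ x) (hty : ty ∈ visitTimes τ Z a ρ y) :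
    sameTree (finalConf τ Z a ρ) x y := by
  rcases lt_trichotomy (lastVisit τ Z a ρ x) (lastVisit τ Z a ρ y) with hlt | heq | hgt
  · exact .single (.inl
      (finalConf_eq_of_adj_of_lastVisit_lt hac hτ hρ hwalk hxy hx hy htx hty hlt))
  · refine absurd ?_ hxy.ne
    rw [← (lastVisit_mem hwalk hx htx).2, heq, (lastVisit_mem hwalk hy hty).2]
  · exact .single (.inr
      (finalConf_eq_of_adj_of_lastVisit_lt hac hτ hρ hwalk hxy.symm hy hx hty htx hgt))

theorem pos_mem_branch_of_lastVisit_lt (hx : x ∉ Z) {t σ : ℕ}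
    (ht : t ∈ visitTimes τ Z a ρ x)
    (hσ : lastVisit τ Z a ρ x < σ) (hσZ : ∀ s < σ, pos τ a ρ s ∉ Z) :
    pos τ a ρ σ ∈ G.branch x (finalConf τ Z a ρ x) := by
  by_contra hout
  have hxz := validConfig_finalConf hτ hρ hwalk x hx
  obtain ⟨k, hLk, hkσ, -, hkx⟩ := hac.exists_step_out_of_branch (f := pos τ a ρ) hxz hσ
    (fun k hk => adj_pos_succ hτ hρ (hσZ k hk))
    (by rw [← finalConf_eq_pos_lastVisit_succ hwalk hx ht]; exact hac.right_mem_branch hxz) hout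
  have := le_lastVisit hwalk hx ⟨fun s hs => hσZ s (by omega), hkx⟩
  omega

theorem start_notMem_branch {i t : ℕ} (hpath : ∀ j ≤ i, (finalConf τ Z a ρ)^[j] a ∉ Z)
    (ht : t ∈ visitTimes τ Z a ρ ((finalConf τ Z a ρ)^[i] a)) :
    a ∉ G.branch ((finalConf τ Z a ρ)^[i] a)
      (finalConf τ Z a ρ ((finalConf τ Z a ρ)^[i] a)) := by
  set ξ := finalConf τ Z a ρ
  have hξ := validConfig_finalConf hτ hρ hwalk
  intro ha
  obtain ⟨j, -, hji, hjz, hjx⟩ := hac.exists_step_out_of_branch (f := (ξ^[·] a))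
    (hξ _ (hpath i le_rfl)) (Nat.zero_le i)
    (fun j hj => by rw [Function.iterate_succ_apply']; exact hξ _ (hpath j hj.le))
    ha left_notMem_branch
  refine finalConf_finalConf_ne hwalk (hpath i le_rfl) (hjz ▸ hpath j hji.le) ht ?_
  rw [← hjz]
  exact (Function.iterate_succ_apply' ξ j a).symm.trans hjx

theorem pos_notMem_branch_of_le_lastVisit (hx : x ∉ Z) {t : ℕ}
    (ht : t ∈ visitTimes τ Z a ρ x) (ha : a ∉ G.branch x (finalConf τ Z a ρ x))
    (hinc : Incomplete G (finalConf τ Z a ρ) x) :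
    ∀ u ≤ lastVisit τ Z a ρ x, pos τ a ρ u ∉ G.branch x (finalConf τ Z a ρ x) := by
  intro u hu hmem
  obtain ⟨y, hxy, hy⟩ := hinc
  have hL := lastVisit_mem hwalk hx ht
  have hxz := validConfig_finalConf hτ hρ hwalk x hx
  obtain ⟨k, -, hku, hkx, hkz⟩ :=
    hac.exists_step_into_branch (f := pos τ a ρ) hxz (Nat.zero_le u)
    (fun k hk => adj_pos_succ hτ hρ (pos_notMem_of_le hL hx (by omega))) ha hmem
  obtain ⟨m, hm⟩ := (hτ x hx).2 _ hxz y hxy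
  obtain ⟨s, -, hsL, hsx, hsy⟩ := exists_exit_between_repeated_exits hkx hL.2 (by omega)
    (hkz.trans (finalConf_eq_pos_lastVisit_succ hwalk hx ht)) (hkz ▸ hm)
  have hys := succ_mem_visitTimes (mem_visitTimes_pos_of_le hL hsL.le) (by rwa [hsx])
  rw [hsy] at hys
  exact hy (sameTree_of_adj_of_mem_visitTimes hac hτ hρ hwalk hxy hx
    (hsy ▸ pos_notMem_of_le hL hx hsL) ht hys)

end Tree

theorem pos_mem_W_of_lastVisit_le (hwalk : IsTransientWalk τ Z a ρ) (hx : x ∉ Z) {t : ℕ}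
    (ht : t ∈ visitTimes τ Z a ρ x)
    (h : ∀ u ≤ lastVisit τ Z a ρ x,
      lastVisit τ Z a ρ (pos τ a ρ u) ≤ lastVisit τ Z a ρ x)
    (u : ℕ) (hu : u ≤ lastVisit τ Z a ρ x) : pos τ a ρ u ∈ W (finalConf τ Z a ρ) x := by
  have hL := lastVisit_mem hwalk hx ht
  have hv := mem_visitTimes_pos_of_le hL hu
  have hvZ := pos_notMem_of_le hL hx hu
  have huv := le_lastVisit hwalk hvZ hv
  rcases (h u hu).lt_or_eq with hlt | heq
  · exact .head (finalConf_eq_pos_lastVisit_succ hwalk hvZ hv)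
      (pos_mem_W_of_lastVisit_le hwalk hx ht h _ hlt)
  · rw [← (lastVisit_mem hwalk hvZ hv).2, heq, hL.2]
    exact .refl
termination_by lastVisit τ Z a ρ x - u

theorem range_subset_W_of_incomplete_general
    {V : Type*} [DecidableEq V]
    (G : SimpleGraph V) (htree : G.IsTree)
    (Z : Set V) (τ : V → V → V) (hτ : ValidMechanism G Z τ)
    (a : V) (ρ : V → V) (hρ : ValidConfig G Z ρ)
    (hwalk : IsTransientWalk τ Z a ρ)
    (i : ℕ) (hpath : ∀ j ≤ i, (finalConf τ Z a ρ)^[j] a ∉ Z)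
    (hinc : Incomplete G (finalConf τ Z a ρ) ((finalConf τ Z a ρ)^[i] a)) :
    ∀ t ≤ lastVisit τ Z a ρ ((finalConf τ Z a ρ)^[i] a),
      pos τ a ρ t ∈ W (finalConf τ Z a ρ) ((finalConf τ Z a ρ)^[i] a) := by
  set x := (finalConf τ Z a ρ)^[i] a
  obtain hempty | ⟨t₀, ht₀⟩ := (visitTimes τ Z a ρ x).eq_empty_or_nonempty
  · -- `x` is never visited, so `lastVisit x = sSup ∅ = 0`
    intro t ht
    obtain rfl : t = 0 := by simpa [lastVisit_eq_sSup, hempty] using ht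
    exact mem_W_iterate _ a i
  have hac := htree.isAcyclic
  have hx : x ∉ Z := hpath i le_rfl
  have hL := lastVisit_mem hwalk hx ht₀
  have hbefore := pos_notMem_branch_of_le_lastVisit hac hτ hρ hwalk hx ht₀
    (start_notMem_branch hac hτ hρ hwalk hpath ht₀) hinc
  refine pos_mem_W_of_lastVisit_le hwalk hx ht₀ fun u hu => not_lt.mp fun hlt => ?_
  have hv := lastVisit_mem hwalk (pos_notMem_of_le hL hx hu) (mem_visitTimes_pos_of_le hL hu)
  exact hbefore u hu (hv.2 ▸ pos_mem_branch_of_lastVisit_lt hac hτ hρ hwalk hx ht₀ hlt hv.1)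

/-- on a locally finite tree, for a transient rotor walk with final rotor
configuration `ξ`, if `x = ξ^[i] a` lies on the maximal forward path from `a` in `ξ` and is
incomplete, then every vertex visited up to and including the last visit to `x` lies in
`W(ξ,x)`, the set of vertices with a directed `ξ`-path to `x`. -/
theorem range_subset_W_of_incomplete
    {V : Type*} [DecidableEq V]
    (G : SimpleGraph V) [G.LocallyFinite] (htree : G.IsTree)
    (Z : Set V) (τ : V → V → V) (hτ : ValidMechanism G Z τ)
    (a : V) (ha : a ∉ Z) (ρ : V → V) (hρ : ValidConfig G Z ρ)
    (hwalk : IsTransientWalk τ Z a ρ)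
    (i : ℕ) (hpath : ∀ j ≤ i, (finalConf τ Z a ρ)^[j] a ∉ Z)
    (hinc : Incomplete G (finalConf τ Z a ρ) ((finalConf τ Z a ρ)^[i] a)) :
    ∀ t ≤ lastVisit τ Z a ρ ((finalConf τ Z a ρ)^[i] a),
      pos τ a ρ t ∈ W (finalConf τ Z a ρ) ((finalConf τ Z a ρ)^[i] a) :=
  range_subset_W_of_incomplete_general G htree Z τ hτ a ρ hρ hwalk i hpath hinc

end RotorWalk
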